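/- With notation as in the prism subdivision, consecutive pentatopes τ_i and τ_{i+1} (i = 1,2,3) intersect in a common facet: e.g., τ₁ ∩ τ₂ = conv(a₀,b₀,c₀,d₁), which is a 3-dimensional face of both. -/
import Mathlib

/-- Two simplices sharing all vertices but one, whose extra vertices lie strictly on
opposite sides of a hyperplane containing the common vertices, intersect in the
convex hull of the common vertices. -/
lemma facet_inter {E : Type*} [AddCommGroup E] [Module ℝ E]
    (g : E →ᵃ[ℝ] ℝ) (K : Set E) (hK : K.Nonempty) (hg : ∀ v ∈ K, g v = 0)
    (u w : E) (hu : 0 < g u) (hw : g w < 0) :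
    convexHull ℝ (insert u K) ∩ convexHull ℝ (insert w K) = convexHull ℝ K := by
  have hzero : ∀ z ∈ convexHull ℝ K, g z = 0 := by
    intro z hz
    have h1 : g z ∈ convexHull ℝ (g '' K) := by
      rw [← AffineMap.image_convexHull]; exact Set.mem_image_of_mem g hz
    have hsub : convexHull ℝ (g '' K) ⊆ {0} :=
      convexHull_min (by rintro _ ⟨v, hv, rfl⟩; exact hg v hv) (convex_singleton 0)
    exact hsub h1
  apply Set.Subset.antisymm
  · rintro x ⟨hx1, hx2⟩
    rw [convexHull_insert hK, mem_convexJoin] at hx1 hx2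
    obtain ⟨u', hu', z, hz, p, q, hp, hq, hpq, hxz⟩ := hx1
    obtain ⟨w', hw', z', hz', p', q', hp', hq', hpq', hxz'⟩ := hx2
    rw [Set.mem_singleton_iff] at hu' hw'
    rw [hu'] at hxz; rw [hw'] at hxz'
    have h1 : g x = p * g u := by
      rw [← hxz, Convex.combo_affine_apply hpq, hzero z hz]
      simp
    have h2 : g x = p' * g w := by
      rw [← hxz', Convex.combo_affine_apply hpq', hzero z' hz']
      simp
    have hge : 0 ≤ g x := h1 ▸ mul_nonneg hp hu.le
    have hle : g x ≤ 0 := h2 ▸ mul_nonpos_of_nonneg_of_nonpos hp' hw.le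
    have hp0 : p = 0 := by
      have h : p * g u = 0 := by rw [← h1]; linarith
      rcases mul_eq_zero.mp h with h | h
      · exact h
      · exact absurd h hu.ne'
    have hq1 : q = 1 := by linarith
    have hxeq : x = z := by rw [← hxz, hp0, hq1]; simp
    exact hxeq ▸ hz
  · exact Set.subset_inter (convexHull_mono (Set.subset_insert u K))
      (convexHull_mono (Set.subset_insert w K))

/-- ψ_t : ℝ³ → ℝ⁴, appending the coordinate t. -/
def lift (t : ℝ) (x : Fin 3 → ℝ) : Fin 4 → ℝ := Fin.snoc x t

set_option maxHeartbeats 1000000 in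
/-- Consecutive pentatopes of the prism subdivision intersect in a common
facet: τ₁ ∩ τ₂ = conv(a₀,b₀,c₀,d₁), τ₂ ∩ τ₃ = conv(a₀,b₀,c₁,d₁),
τ₃ ∩ τ₄ = conv(a₀,b₁,c₁,d₁), and in each case the four facet vertices are affinely
independent (so the facet is 3-dimensional). -/
theorem prism_subdivision_consecutive_facets
    (a b c d : Fin 3 → ℝ) (hT : AffineIndependent ℝ ![a, b, c, d])
    (r s : ℝ) (hrs : r < s) :
    (convexHull ℝ {lift r a, lift r b, lift r c, lift r d, lift s d} ∩
        convexHull ℝ {lift r a, lift r b, lift r c, lift s c, lift s d} =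
      convexHull ℝ ({lift r a, lift r b, lift r c, lift s d} : Set (Fin 4 → ℝ)) ∧
      AffineIndependent ℝ ![lift r a, lift r b, lift r c, lift s d]) ∧
    (convexHull ℝ {lift r a, lift r b, lift r c, lift s c, lift s d} ∩
        convexHull ℝ {lift r a, lift r b, lift s b, lift s c, lift s d} =
      convexHull ℝ ({lift r a, lift r b, lift s c, lift s d} : Set (Fin 4 → ℝ)) ∧
      AffineIndependent ℝ ![lift r a, lift r b, lift s c, lift s d]) ∧
    (convexHull ℝ {lift r a, lift r b, lift s b, lift s c, lift s d} ∩
        convexHull ℝ {lift r a, lift s a, lift s b, lift s c, lift s d} =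
      convexHull ℝ ({lift r a, lift s b, lift s c, lift s d} : Set (Fin 4 → ℝ)) ∧
      AffineIndependent ℝ ![lift r a, lift s b, lift s c, lift s d]) := by
  have hcard : Fintype.card (Fin 4) = Module.finrank ℝ (Fin 3 → ℝ) + 1 := by
    simp [Module.finrank_pi]
  have htop : affineSpan ℝ (Set.range ![a,b,c,d]) = ⊤ :=
    hT.affineSpan_eq_top_iff_card_eq_finrank_add_one.mpr hcard
  let B : AffineBasis (Fin 4) ℝ (Fin 3 → ℝ) := ⟨![a,b,c,d], hT, htop⟩
  let π : (Fin 4 → ℝ) →ᵃ[ℝ] (Fin 3 → ℝ) := (LinearMap.funLeft ℝ ℝ Fin.castSucc).toAffineMap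
  have hπ : ∀ t x, π (lift t x) = x := by
    intro t x; funext i
    simp [π, lift, LinearMap.funLeft_apply, Function.comp, Fin.snoc_castSucc]
  let τ : (Fin 4 → ℝ) →ᵃ[ℝ] ℝ :=
    (s-r)⁻¹ • ((LinearMap.proj (3 : Fin 4)).toAffineMap - AffineMap.const ℝ (Fin 4 → ℝ) r)
  have h3 : ∀ t x, lift t x 3 = t := by
    intro t x
    have h : (3 : Fin 4) = Fin.last 3 := rfl
    rw [lift, h, Fin.snoc_last]
  have hτr : ∀ x, τ (lift r x) = 0 := by
    intro x; simp [τ, h3]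
  have hτs : ∀ x, τ (lift s x) = 1 := by
    intro x; simp [τ, h3]
    rw [inv_mul_cancel₀ (sub_ne_zero.mpr hrs.ne')]
  have hB0 : B 0 = a := rfl
  have hB1 : B 1 = b := rfl
  have hB2 : B 2 = c := rfl
  have hB3 : B 3 = d := rfl
  -- affine independence of the facets: they project to ![a,b,c,d] under π
  have hAI : ∀ t₀ t₁ t₂ t₃ : ℝ,
      AffineIndependent ℝ ![lift t₀ a, lift t₁ b, lift t₂ c, lift t₃ d] := by
    intro t₀ t₁ t₂ t₃
    apply AffineIndependent.of_comp π
    have h : π ∘ ![lift t₀ a, lift t₁ b, lift t₂ c, lift t₃ d] = ![a, b, c, d] := by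
      funext i; fin_cases i <;> simp [hπ]
    rwa [h]
  -- the three separating functionals
  let g1 : (Fin 4 → ℝ) →ᵃ[ℝ] ℝ := (B.coord 3).comp π - τ
  let g2 : (Fin 4 → ℝ) →ᵃ[ℝ] ℝ := ((B.coord 2).comp π + (B.coord 3).comp π) - τ
  let g3 : (Fin 4 → ℝ) →ᵃ[ℝ] ℝ :=
    ((B.coord 1).comp π + (B.coord 2).comp π + (B.coord 3).comp π) - τ
  -- evaluations of g1
  have e1a : g1 (lift r a) = 0 := by simp [g1, hπ, hτr, ← hB0, B.coord_apply]
  have e1b : g1 (lift r b) = 0 := by simp [g1, hπ, hτr, ← hB1, B.coord_apply]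
  have e1c : g1 (lift r c) = 0 := by simp [g1, hπ, hτr, ← hB2, B.coord_apply]
  have e1d : g1 (lift s d) = 0 := by simp [g1, hπ, hτs, ← hB3, B.coord_apply]
  have e1u : g1 (lift r d) = 1 := by simp [g1, hπ, hτr, ← hB3, B.coord_apply]
  have e1w : g1 (lift s c) = -1 := by simp [g1, hπ, hτs, ← hB2, B.coord_apply]
  -- evaluations of g2
  have e2a : g2 (lift r a) = 0 := by simp [g2, hπ, hτr, ← hB0, B.coord_apply]
  have e2b : g2 (lift r b) = 0 := by simp [g2, hπ, hτr, ← hB1, B.coord_apply]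
  have e2c : g2 (lift s c) = 0 := by simp [g2, hπ, hτs, ← hB2, B.coord_apply]
  have e2d : g2 (lift s d) = 0 := by simp [g2, hπ, hτs, ← hB3, B.coord_apply]
  have e2u : g2 (lift r c) = 1 := by simp [g2, hπ, hτr, ← hB2, B.coord_apply]
  have e2w : g2 (lift s b) = -1 := by simp [g2, hπ, hτs, ← hB1, B.coord_apply]
  -- evaluations of g3
  have e3a : g3 (lift r a) = 0 := by simp [g3, hπ, hτr, ← hB0, B.coord_apply]
  have e3b : g3 (lift s b) = 0 := by simp [g3, hπ, hτs, ← hB1, B.coord_apply]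
  have e3c : g3 (lift s c) = 0 := by simp [g3, hπ, hτs, ← hB2, B.coord_apply]
  have e3d : g3 (lift s d) = 0 := by simp [g3, hπ, hτs, ← hB3, B.coord_apply]
  have e3u : g3 (lift r b) = 1 := by simp [g3, hπ, hτr, ← hB1, B.coord_apply]
  have e3w : g3 (lift s a) = -1 := by simp [g3, hπ, hτs, ← hB0, B.coord_apply]
  refine ⟨⟨?_, hAI r r r s⟩, ⟨?_, hAI r r s s⟩, ⟨?_, hAI r s s s⟩⟩
  · -- τ₁ ∩ τ₂
    have hS1 : ({lift r a, lift r b, lift r c, lift r d, lift s d} : Set (Fin 4 → ℝ)) =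
        insert (lift r d) {lift r a, lift r b, lift r c, lift s d} := by
      ext x; simp only [Set.mem_insert_iff, Set.mem_singleton_iff]; tauto
    have hS2 : ({lift r a, lift r b, lift r c, lift s c, lift s d} : Set (Fin 4 → ℝ)) =
        insert (lift s c) {lift r a, lift r b, lift r c, lift s d} := by
      ext x; simp only [Set.mem_insert_iff, Set.mem_singleton_iff]; tauto
    rw [hS1, hS2]
    refine facet_inter g1 _ ⟨lift r a, by simp⟩ ?_ _ _ (by rw [e1u]; norm_num)
      (by rw [e1w]; norm_num)
    rintro v hv
    simp only [Set.mem_insert_iff, Set.mem_singleton_iff] at hv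
    rcases hv with rfl | rfl | rfl | rfl
    exacts [e1a, e1b, e1c, e1d]
  · -- τ₂ ∩ τ₃
    have hS1 : ({lift r a, lift r b, lift r c, lift s c, lift s d} : Set (Fin 4 → ℝ)) =
        insert (lift r c) {lift r a, lift r b, lift s c, lift s d} := by
      ext x; simp only [Set.mem_insert_iff, Set.mem_singleton_iff]; tauto
    have hS2 : ({lift r a, lift r b, lift s b, lift s c, lift s d} : Set (Fin 4 → ℝ)) =
        insert (lift s b) {lift r a, lift r b, lift s c, lift s d} := by
      ext x; simp only [Set.mem_insert_iff, Set.mem_singleton_iff]; tauto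
    rw [hS1, hS2]
    refine facet_inter g2 _ ⟨lift r a, by simp⟩ ?_ _ _ (by rw [e2u]; norm_num)
      (by rw [e2w]; norm_num)
    rintro v hv
    simp only [Set.mem_insert_iff, Set.mem_singleton_iff] at hv
    rcases hv with rfl | rfl | rfl | rfl
    exacts [e2a, e2b, e2c, e2d]
  · -- τ₃ ∩ τ₄
    have hS1 : ({lift r a, lift r b, lift s b, lift s c, lift s d} : Set (Fin 4 → ℝ)) =
        insert (lift r b) {lift r a, lift s b, lift s c, lift s d} := by
      ext x; simp only [Set.mem_insert_iff, Set.mem_singleton_iff]; tauto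
    have hS2 : ({lift r a, lift s a, lift s b, lift s c, lift s d} : Set (Fin 4 → ℝ)) =
        insert (lift s a) {lift r a, lift s b, lift s c, lift s d} := by
      ext x; simp only [Set.mem_insert_iff, Set.mem_singleton_iff]; tauto
    rw [hS1, hS2]
    refine facet_inter g3 _ ⟨lift r a, by simp⟩ ?_ _ _ (by rw [e3u]; norm_num)
      (by rw [e3w]; norm_num)
    rintro v hv
    simp only [Set.mem_insert_iff, Set.mem_singleton_iff] at hv
    rcases hv with rfl | rfl | rfl | rfl
    exacts [e3a, e3b, e3c, e3d]
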